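/- arXiv:2103.10854 — 4 statements merged into one kernel-verified Lean document; each statement's English description precedes it below -/
import Mathlib

section
/- Let ε > 0 and μ_i ∈ M^+(X_i) with ln(σ_{μ_i}) ∈ L^∞(X_i,γ_i) for all i, and let f ∈ L^{∞,×}(X). Then for every j = 1,…,N one has ‖f^{(c,ε,j)} + λ_{f,j}‖_{L^∞(X_j,γ_j)} ≤ ‖c‖_{L^∞(X,γ^⊗)} + ε‖ln(σ_{μ_j})‖_{L^∞(X_j,γ_j)}, where λ_{f,j} = ε ln ∫_{×_{i≠j} X_i} exp(f_j^⊕/ε) dγ_j^⊗ ∈ ℝ. In particular, f^{(c,ε,j)} has bounded oscillation: sup_{y∈X_j} f^{(c,ε,j)}(y) − inf_{y∈X_j} f^{(c,ε,j)}(y) < ∞. -/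
/-!
Write `A y = ∫ exp ((f_j^⊕ - c (y, ·)) / ε)` and `B = ∫ exp (f_j^⊕ / ε)` over `γ_j^⊗`, so that
`f^{(c,ε,j)} y + λ_{f,j} = ε ln σ_{μ_j} y + (ε ln B - ε ln (A y))`. If `0 ≤ c (y, ·) ≤ K`
almost everywhere, then `exp (-K/ε) B ≤ A y ≤ B`, so the bracket lies in `[0, K]`. Slicing the
null set `{|c| > ‖c‖_∞}` of `γ^⊗ = γ_j ⊗ γ_j^⊗` gives `K = ‖c‖_∞` for `γ_j`-a.e. `y`, hence the
`L^∞` bound; taking `K = sup c` instead gives the bound for every `y`, hence bounded oscillation.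
-/

open MeasureTheory ENNReal Real Filter Topology

noncomputable section
namespace UMOT

/-- The Boltzmann–Shannon entropy integrand `x ↦ x log x − x + 1` (with value `⊤` on `(-∞,0)`). -/
def klFun (x : ℝ) : ℝ≥0∞ := if x < 0 then ⊤ else ENNReal.ofReal (x * Real.log x - x + 1)

/-- The recession constant `φ'_∞ = lim_{x→∞} φ(x)/x` of an entropy function. -/
def recession (φ : ℝ → ℝ≥0∞) : ℝ≥0∞ :=
  Filter.limsup (fun x : ℝ => φ x / ENNReal.ofReal x) Filter.atTop

/-- The φ-divergence `D_φ(μ,ν) = ∫ φ(dμ/dν) dν + φ'_∞ μ^⊥(X)`. -/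
def Dphi {Z : Type*} [MeasurableSpace Z] (φ : ℝ → ℝ≥0∞) (μ ν : Measure Z) : ℝ≥0∞ :=
  ∫⁻ z, φ ((μ.rnDeriv ν z).toReal) ∂ν + recession φ * μ.singularPart ν Set.univ

/-- The Kullback–Leibler divergence, i.e. the φ-divergence for the Boltzmann–Shannon entropy. -/
def KL {Z : Type*} [MeasurableSpace Z] (μ ν : Measure Z) : ℝ≥0∞ := Dphi klFun μ ν

/-- An entropy function: nonnegative (by the codomain `ℝ≥0∞`), proper (since `φ 1 = 0`),
convex, lower semicontinuous, with `φ 1 = 0` and `φ = ⊤` on `(-∞,0)`. -/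
structure IsEntropyFunction (φ : ℝ → ℝ≥0∞) : Prop where
  one_eq_zero : φ 1 = 0
  top_of_neg : ∀ x : ℝ, x < 0 → φ x = ⊤
  lsc : LowerSemicontinuous φ
  convex : ∀ x y t : ℝ, 0 ≤ t → t ≤ 1 →
    φ (t * x + (1 - t) * y) ≤ ENNReal.ofReal t * φ x + ENNReal.ofReal (1 - t) * φ y

/-- Reassemble a point of the product space from its `j`-th coordinate and the remaining
coordinates. -/
def glue {N : ℕ} {X : Fin N → Type*} (j : Fin N) (y : X j)
    (z : ∀ i : {i : Fin N // i ≠ j}, X i.1) (i : Fin N) : X i :=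
  if h : i = j then cast (congrArg X h.symm) y else z ⟨i, h⟩

/-- The `j`-th `(c,ε)`-transform
`f^{(c,ε,j)}(y) = ε ln σ_{μ_j}(y) − ε ln ∫ exp((Σ_{i≠j} f_i − c)/ε) dγ_j^⊗`,
where `σ` is the tuple of densities `σ_{μ_i} = dμ_i/dγ_i`. -/
def ctransform {N : ℕ} {X : Fin N → Type*} [∀ i, MeasurableSpace (X i)]
    (c : (∀ i, X i) → ℝ) (ε : ℝ) (σ : ∀ i, X i → ℝ) (γ : ∀ i, Measure (X i))
    (f : ∀ i, X i → ℝ) (j : Fin N) (y : X j) : ℝ :=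
  ε * Real.log (σ j y) -
    ε * Real.log (∫ z : ∀ i : {i : Fin N // i ≠ j}, X i.1,
      Real.exp (((∑ i : {i : Fin N // i ≠ j}, f i.1 (z i)) - c (glue j y z)) / ε)
        ∂(Measure.pi fun i : {i : Fin N // i ≠ j} => γ i.1))

/-- Membership in `L^{∞,×}(X)`: each component is a bounded measurable function. -/
def BddMeasTuple {N : ℕ} {X : Fin N → Type*} [∀ i, MeasurableSpace (X i)]
    (f : ∀ i, X i → ℝ) : Prop :=
  ∀ i, Measurable (f i) ∧ ∃ M : ℝ, ∀ x, |f i x| ≤ M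

/-- The constant `λ_{f,j} = ε ln ∫ exp(f_j^⊕/ε) dγ_j^⊗`. -/
def lamConst {N : ℕ} {X : Fin N → Type*} [∀ i, MeasurableSpace (X i)]
    (ε : ℝ) (γ : ∀ i, Measure (X i)) (f : ∀ i, X i → ℝ) (j : Fin N) : ℝ :=
  ε * Real.log (∫ z : ∀ i : {i : Fin N // i ≠ j}, X i.1,
      Real.exp ((∑ i : {i : Fin N // i ≠ j}, f i.1 (z i)) / ε)
        ∂(Measure.pi fun i : {i : Fin N // i ≠ j} => γ i.1))

lemma abs_mul_log_sub_mul_log_le {I J K ε : ℝ} (hε : 0 < ε) (hK : 0 ≤ K) (hJ : 0 ≤ J)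
    (hJI : J ≤ I) (hIJ : I ≤ Real.exp (K / ε) * J) : |ε * Real.log I - ε * Real.log J| ≤ K := by
  rcases hJ.eq_or_lt with rfl | hJpos
  · have hI : I = 0 := le_antisymm (by simpa using hIJ) hJI
    simpa [hI] using hK
  have hlow : Real.log J ≤ Real.log I := Real.log_le_log hJpos hJI
  have hup : Real.log I ≤ K / ε + Real.log J := by
    calc Real.log I ≤ Real.log (Real.exp (K / ε) * J) := Real.log_le_log (hJpos.trans_le hJI) hIJ
      _ = K / ε + Real.log J := by rw [Real.log_mul (Real.exp_pos _).ne' hJpos.ne', Real.log_exp]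
  rw [← mul_sub, abs_mul, abs_of_pos hε, abs_of_nonneg (sub_nonneg.2 hlow)]
  exact (le_div_iff₀' hε).1 (by linarith)

lemma abs_mul_log_integral_exp_sub_le {α : Type*} [MeasurableSpace α] {ν : Measure α}
    {g h : α → ℝ} {ε K : ℝ} (hε : 0 < ε) (hK : 0 ≤ K)
    (hgm : AEMeasurable g ν) (hhm : AEMeasurable h ν)
    (hg : Integrable (fun x => Real.exp (g x / ε)) ν)
    (hh0 : ∀ᵐ x ∂ν, 0 ≤ h x) (hhK : ∀ᵐ x ∂ν, h x ≤ K) :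
    |ε * Real.log (∫ x, Real.exp (g x / ε) ∂ν)
      - ε * Real.log (∫ x, Real.exp ((g x - h x) / ε) ∂ν)| ≤ K := by
  have hexp_le : ∀ {a b : ℝ}, a ≤ b → Real.exp (a / ε) ≤ Real.exp (b / ε) :=
    fun hab => Real.exp_le_exp.2 (div_le_div_of_nonneg_right hab hε.le)
  have hgh : Integrable (fun x => Real.exp ((g x - h x) / ε)) ν := by
    refine hg.mono ((hgm.sub hhm).div_const ε).exp.aestronglyMeasurable ?_
    filter_upwards [hh0] with x hx
    simp only [Real.norm_eq_abs, abs_of_pos (Real.exp_pos _)]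
    exact hexp_le (sub_le_self _ hx)
  refine abs_mul_log_sub_mul_log_le hε hK (integral_nonneg fun _ => (Real.exp_pos _).le)
    (integral_mono_ae hgh hg (hh0.mono fun x hx => hexp_le (sub_le_self _ hx))) ?_
  rw [← integral_const_mul]
  refine integral_mono_ae hg (hgh.const_mul _) ?_
  filter_upwards [hhK] with x hx
  rw [← Real.exp_add, ← add_div]
  exact hexp_le (by linarith)

lemma ae_abs_le_toReal_essSup {α : Type*} [MeasurableSpace α] {μ : Measure α} {u : α → ℝ}
    {C : ℝ} (hC : ∀ x, |u x| ≤ C) :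
    ∀ᵐ x ∂μ, |u x| ≤ (essSup (fun x => ENNReal.ofReal |u x|) μ).toReal := by
  have hfin : essSup (fun x => ENNReal.ofReal |u x|) μ ≠ ⊤ :=
    ne_top_of_le_ne_top ENNReal.ofReal_ne_top
      (essSup_le_of_ae_le _ (ae_of_all _ fun x => ENNReal.ofReal_le_ofReal (hC x)))
  filter_upwards [ae_le_essSup (fun x => ENNReal.ofReal |u x|)] with x hx
  exact (ENNReal.ofReal_le_iff_le_toReal hfin).1 hx

lemma essSup_ofReal_abs_le_of_ae_abs_sub_le {α : Type*} [MeasurableSpace α] {μ : Measure α}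
    {u v : α → ℝ} {ε K : ℝ} (hε : 0 ≤ ε) (hK : 0 ≤ K) (h : ∀ᵐ x ∂μ, |u x - ε * v x| ≤ K) :
    essSup (fun x => ENNReal.ofReal |u x|) μ
      ≤ ENNReal.ofReal K + ENNReal.ofReal ε * essSup (fun x => ENNReal.ofReal |v x|) μ := by
  refine essSup_le_of_ae_le _ ?_
  filter_upwards [h, ae_le_essSup fun x => ENNReal.ofReal |v x|] with x hx hvx
  calc ENNReal.ofReal |u x| ≤ ENNReal.ofReal (K + ε * |v x|) := by
        have htri := abs_sub_abs_le_abs_sub (u x) (ε * v x)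
        rw [abs_mul, abs_of_nonneg hε] at htri
        exact ENNReal.ofReal_le_ofReal (by linarith)
    _ = ENNReal.ofReal K + ENNReal.ofReal ε * ENNReal.ofReal |v x| := by
        rw [ENNReal.ofReal_add hK (by positivity), ENNReal.ofReal_mul hε]
    _ ≤ _ := by gcongr

lemma integrable_exp_div_of_abs_le {α : Type*} [MeasurableSpace α] {ν : Measure α}
    [IsFiniteMeasure ν] {g : α → ℝ} {M : ℝ} (hgm : AEMeasurable g ν) (hM : ∀ x, |g x| ≤ M)
    (ε : ℝ) : Integrable (fun x => Real.exp (g x / ε)) ν := by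
  refine Integrable.of_bound (hgm.div_const ε).exp.aestronglyMeasurable (Real.exp (M / |ε|))
    (ae_of_all _ fun x => ?_)
  rw [Real.norm_eq_abs, abs_of_pos (Real.exp_pos _), Real.exp_le_exp]
  calc g x / ε ≤ |g x / ε| := le_abs_self _
    _ ≤ M / |ε| := by rw [abs_div]; exact div_le_div_of_nonneg_right (hM x) (abs_nonneg ε)

section Glue

variable {N : ℕ} {X : Fin N → Type*}

@[simp] lemma glue_apply_same {j : Fin N} (y : X j)
    (z : ∀ i : {i : Fin N // i ≠ j}, X i.1) : glue j y z j = y := by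
  simp [glue]

@[simp] lemma glue_apply_ne {j : Fin N} (y : X j)
    (z : ∀ i : {i : Fin N // i ≠ j}, X i.1) {i : Fin N} (h : i ≠ j) :
    glue j y z i = z ⟨i, h⟩ := by
  simp [glue, h]

variable [∀ i, MeasurableSpace (X i)]

lemma measurable_glue_right {j : Fin N} (y : X j) :
    Measurable (glue j y : (∀ i : {i : Fin N // i ≠ j}, X i.1) → ∀ i, X i) := by
  refine measurable_pi_lambda _ fun i => ?_
  by_cases h : i = j
  · subst h
    simp only [glue_apply_same]
    exact measurable_const
  · simp only [glue_apply_ne _ _ h]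
    exact measurable_pi_apply _

lemma measurePreserving_glue (γ : ∀ i, Measure (X i)) [∀ i, SigmaFinite (γ i)] (j : Fin N) :
    MeasurePreserving (fun p : X j × (∀ i : {i : Fin N // i ≠ j}, X i.1) => glue j p.1 p.2)
      ((γ j).prod (Measure.pi fun i : {i : Fin N // i ≠ j} => γ i.1)) (Measure.pi γ) := by
  classical
  -- the `Fintype` instance of `measurePreserving_piEquivPiSubtypeProd`, not `Fintype.subtypeEq`
  let : Fintype {i : Fin N // i = j} := Subtype.fintype _
  have hsplit := ((measurePreserving_piEquivPiSubtypeProd γ (· = j)).symm _).comp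
    (((measurePreserving_piUnique fun i : {i : Fin N // i = j} => γ i.1).symm _).prod
      (MeasurePreserving.id (Measure.pi fun i : {i : Fin N // i ≠ j} => γ i.1)))
  refine Eq.subst (motive := fun F => MeasurePreserving F _ _) ?_ hsplit
  ext p i
  by_cases h : i = j
  · subst h
    simp [MeasurableEquiv.piEquivPiSubtypeProd, MeasurableEquiv.piUnique, Equiv.piUnique]
    exact uniqueElim_default (α := fun k : {k : Fin N // k = i} => X k.1) p.1
  · simp [MeasurableEquiv.piEquivPiSubtypeProd, h]

lemma ae_ae_glue_of_ae_pi {γ : ∀ i, Measure (X i)} [∀ i, SigmaFinite (γ i)] {j : Fin N}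
    {p : (∀ i, X i) → Prop} (hp : ∀ᵐ x ∂Measure.pi γ, p x) :
    ∀ᵐ y ∂γ j, ∀ᵐ z ∂Measure.pi (fun i : {i : Fin N // i ≠ j} => γ i.1), p (glue j y z) :=
  Measure.ae_ae_of_ae_prod ((measurePreserving_glue γ j).quasiMeasurePreserving.ae hp)

end Glue

namespace BddMeasTuple

variable {N : ℕ} {X : Fin N → Type*} [∀ i, MeasurableSpace (X i)] {f : ∀ i, X i → ℝ}

lemma measurable_sum_ne (hf : BddMeasTuple f) (j : Fin N) :
    Measurable fun z : ∀ i : {i : Fin N // i ≠ j}, X i.1 => ∑ i, f i.1 (z i) :=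
  Finset.measurable_sum _ fun i _ => (hf i.1).1.comp (measurable_pi_apply i)

lemma exists_abs_sum_ne_le (hf : BddMeasTuple f) (j : Fin N) :
    ∃ M, ∀ z : ∀ i : {i : Fin N // i ≠ j}, X i.1, |∑ i, f i.1 (z i)| ≤ M := by
  choose M hM using fun i => (hf i).2
  exact ⟨∑ i : {i : Fin N // i ≠ j}, M i.1, fun z =>
    (Finset.abs_sum_le_sum_abs _ _).trans (Finset.sum_le_sum fun i _ => hM i.1 (z i))⟩

end BddMeasTuple

lemma abs_ctransform_add_lamConst_sub_le {N : ℕ} {X : Fin N → Type*}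
    [∀ i, MeasurableSpace (X i)] {γ : ∀ i, Measure (X i)} [∀ i, IsFiniteMeasure (γ i)]
    {c : (∀ i, X i) → ℝ} (hcm : Measurable c) (hc0 : ∀ x, 0 ≤ c x) {ε : ℝ} (hε : 0 < ε)
    (σ : ∀ i, X i → ℝ) {f : ∀ i, X i → ℝ} (hf : BddMeasTuple f) {j : Fin N} (y : X j)
    {K : ℝ} (hK : 0 ≤ K)
    (hcK : ∀ᵐ z ∂Measure.pi (fun i : {i : Fin N // i ≠ j} => γ i.1), c (glue j y z) ≤ K) :
    |ctransform c ε σ γ f j y + lamConst ε γ f j - ε * Real.log (σ j y)| ≤ K := by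
  obtain ⟨M, hM⟩ := hf.exists_abs_sum_ne_le j
  have hS := hf.measurable_sum_ne j
  have key := abs_mul_log_integral_exp_sub_le (h := fun z => c (glue j y z)) hε hK
    hS.aemeasurable (hcm.comp (measurable_glue_right y)).aemeasurable
    (integrable_exp_div_of_abs_le hS.aemeasurable hM ε) (ae_of_all _ fun z => hc0 _) hcK
  convert key using 2
  unfold ctransform lamConst
  abel

theorem ctransform_bound_general
    {N : ℕ} {X : Fin N → Type*}
    [∀ i, TopologicalSpace (X i)] [∀ i, PolishSpace (X i)] [∀ i, CompactSpace (X i)]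
    [∀ i, MeasurableSpace (X i)] [∀ i, BorelSpace (X i)]
    (γ : ∀ i, Measure (X i)) [∀ i, IsFiniteMeasure (γ i)]
    (σ : ∀ i, X i → ℝ)
    (hσb : ∀ i, ∃ M : ℝ, ∀ x, |Real.log (σ i x)| ≤ M)
    (c : (∀ i, X i) → ℝ) (hc : Continuous c) (hc0 : ∀ x, 0 ≤ c x)
    (ε : ℝ) (hε : 0 < ε)
    (f : ∀ i, X i → ℝ) (hf : BddMeasTuple f) (j : Fin N) :
    essSup (fun y => (ENNReal.ofReal |ctransform c ε σ γ f j y + lamConst ε γ f j|)) (γ j)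
      ≤ essSup (fun x => (ENNReal.ofReal |c x|)) (Measure.pi γ)
        + ENNReal.ofReal ε * essSup (fun y => (ENNReal.ofReal |Real.log (σ j y)|)) (γ j)
    ∧ ∃ M : ℝ, ∀ y y' : X j,
        ctransform c ε σ γ f j y - ctransform c ε σ γ f j y' ≤ M := by
  let cCont : C((∀ i, X i), ℝ) := ⟨c, hc⟩
  have hc_le : ∀ x, c x ≤ ‖cCont‖ := fun x =>
    (le_abs_self _).trans (cCont.norm_coe_le_norm x)
  have hcm : Measurable c := hc.measurable
  set K := (essSup (fun x => ENNReal.ofReal |c x|) (Measure.pi γ)).toReal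
  have hcK : ∀ᵐ y ∂γ j, ∀ᵐ z ∂Measure.pi (fun i : {i : Fin N // i ≠ j} => γ i.1),
      c (glue j y z) ≤ K :=
    ae_ae_glue_of_ae_pi <| (ae_abs_le_toReal_essSup fun x =>
      (abs_of_nonneg (hc0 x)).trans_le (hc_le x)).mono fun x hx => (le_abs_self _).trans hx
  constructor
  · refine (essSup_ofReal_abs_le_of_ae_abs_sub_le hε.le ENNReal.toReal_nonneg
      (hcK.mono fun y hy => abs_ctransform_add_lamConst_sub_le hcm hc0 hε σ hf y
        ENNReal.toReal_nonneg hy)).trans ?_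
    gcongr
    exact ENNReal.ofReal_toReal_le
  · obtain ⟨M, hM⟩ := hσb j
    have hdev (y : X j) := abs_le.1 (abs_ctransform_add_lamConst_sub_le (γ := γ) hcm hc0 hε σ hf
      y (norm_nonneg _) (ae_of_all _ fun z => hc_le _))
    refine ⟨2 * (ε * M + ‖cCont‖), fun y y' => ?_⟩
    have hσ : ε * (Real.log (σ j y) - Real.log (σ j y')) ≤ ε * (2 * M) :=
      mul_le_mul_of_nonneg_left (by linarith [abs_le.1 (hM y), abs_le.1 (hM y')]) hε.le
    linarith [hdev y, hdev y']

/-- (Lemma 4.1 i)): a uniform bound on the recentered `(c,ε)`-transform,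
`‖f^{(c,ε,j)} + λ_{f,j}‖_{L^∞(X_j,γ_j)} ≤ ‖c‖_{L^∞(X,γ^⊗)} + ε ‖ln σ_{μ_j}‖_{L^∞(X_j,γ_j)}`;
in particular `f^{(c,ε,j)}` has bounded oscillation. -/
theorem ctransform_bound
    {N : ℕ} {X : Fin N → Type*}
    [∀ i, TopologicalSpace (X i)] [∀ i, PolishSpace (X i)] [∀ i, CompactSpace (X i)]
    [∀ i, Nonempty (X i)] [∀ i, MeasurableSpace (X i)] [∀ i, BorelSpace (X i)]
    (γ : ∀ i, Measure (X i)) [∀ i, IsFiniteMeasure (γ i)]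
    (μ : ∀ i, Measure (X i)) [∀ i, IsFiniteMeasure (μ i)]
    (σ : ∀ i, X i → ℝ) (hσm : ∀ i, Measurable (σ i))
    (hσd : ∀ i, μ i = (γ i).withDensity (fun x => ENNReal.ofReal (σ i x)))
    (hσb : ∀ i, ∃ M : ℝ, ∀ x, |Real.log (σ i x)| ≤ M)
    (c : (∀ i, X i) → ℝ) (hc : Continuous c) (hc0 : ∀ x, 0 ≤ c x)
    (ε : ℝ) (hε : 0 < ε)
    (f : ∀ i, X i → ℝ) (hf : BddMeasTuple f) (j : Fin N) :
    essSup (fun y => (ENNReal.ofReal |ctransform c ε σ γ f j y + lamConst ε γ f j|)) (γ j)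
      ≤ essSup (fun x => (ENNReal.ofReal |c x|)) (Measure.pi γ)
        + ENNReal.ofReal ε * essSup (fun y => (ENNReal.ofReal |Real.log (σ j y)|)) (γ j)
    ∧ ∃ M : ℝ, ∀ y y' : X j,
        ctransform c ε σ γ f j y - ctransform c ε σ γ f j y' ≤ M :=
  ctransform_bound_general γ σ hσb c hc hc0 ε hε f hf j

end UMOT
end
end

section
/- For every entropy function φ ∈ Γ_0(ℝ) and ε > 0, the anisotropic proximity operator aprox_{φ^*}^ε(p) = argmin_{q∈ℝ} { ε e^{(p−q)/ε} + φ^*(q) } is well-defined (the minimizer exists and is unique) and the map p ↦ aprox_{φ^*}^ε(p) is 1-Lipschitz on ℝ. -/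
open MeasureTheory ENNReal Real Filter Topology

noncomputable section
namespace UMOT

/-- Fenchel conjugate `φ^*(q) = sup_x (qx − φ(x))`, valued in the extended reals. -/
def fconj (φ : ℝ → ℝ≥0∞) (q : ℝ) : EReal :=
  ⨆ x : ℝ, ((q * x : ℝ) : EReal) - ((φ x : ℝ≥0∞) : EReal)

/-- The objective of the anisotropic proximity operator, `q ↦ ε e^{(p−q)/ε} + φ^*(q)`. -/
def aproxObj (φ : ℝ → ℝ≥0∞) (ε p q : ℝ) : EReal :=
  ((ε * Real.exp ((p - q) / ε) : ℝ) : EReal) + fconj φ q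

open Set

/-! Since `φ 1 = 0`, the conjugate satisfies `φ^*(q) ≥ q`, so the objective is lower
semicontinuous and coercive and has a minimizer, which lies in the domain of `φ^*`. There
the problem is to minimize `k (p - q) + g q` with `k x = ε e^{x/ε}` strictly convex and
`g = φ^*` convex. Every remaining claim comes from the exchange inequality
`f x' + f y' ≤ f x + f y` for convex `f`, `x ≤ x' ≤ y` and `x' + y' = x + y` (strict for
strictly convex `f` when `x < x' < y`). Applied to `k` and `g` at the midpoint of two
minimizers it gives uniqueness; applied to `k` at `p₁ - a₂`, `p₂ - a₁` it shows that `p ↦ a p`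
is monotone; applied to `g` at `a₁ + (p₂ - p₁)`, `a₂ - (p₂ - p₁)` it produces a second minimizer
for `p₁` unless `a₂ ≤ a₁ + (p₂ - p₁)`. -/

theorem _root_.ConvexOn.map_add_map_le_of_add_eq {s : Set ℝ} {f : ℝ → ℝ} (hf : ConvexOn ℝ s f)
    {x y x' y' : ℝ} (hx : x ∈ s) (hy : y ∈ s) (hxx' : x ≤ x') (hx'y : x' ≤ y)
    (h : x' + y' = x + y) : f x' + f y' ≤ f x + f y := by
  obtain ⟨a, b, ha, hb, hab, rfl⟩ : x' ∈ segment ℝ x y := by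
    rw [segment_eq_Icc (hxx'.trans hx'y)]; exact ⟨hxx', hx'y⟩
  obtain rfl : y' = b • x + a • y := by
    simp only [smul_eq_mul] at h ⊢; linear_combination h - (x + y) * hab
  have h₁ := hf.2 hx hy ha hb hab
  have h₂ := hf.2 hx hy hb ha (by rwa [add_comm])
  simp only [smul_eq_mul] at h₁ h₂ ⊢
  obtain rfl : b = 1 - a := by linarith
  linarith

theorem _root_.StrictConvexOn.map_add_map_lt_of_add_eq {s : Set ℝ} {f : ℝ → ℝ}
    (hf : StrictConvexOn ℝ s f) {x y x' y' : ℝ} (hx : x ∈ s) (hy : y ∈ s) (hxx' : x < x')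
    (hx'y : x' < y) (h : x' + y' = x + y) : f x' + f y' < f x + f y := by
  obtain ⟨a, b, ha, hb, hab, rfl⟩ : x' ∈ openSegment ℝ x y := by
    rw [openSegment_eq_Ioo (hxx'.trans hx'y)]; exact ⟨hxx', hx'y⟩
  obtain rfl : y' = b • x + a • y := by
    simp only [smul_eq_mul] at h ⊢; linear_combination h - (x + y) * hab
  have hxy : x ≠ y := (hxx'.trans hx'y).ne
  have h₁ := hf.2 hx hy hxy ha hb hab
  have h₂ := hf.2 hx hy hxy hb ha (by rwa [add_comm])
  simp only [smul_eq_mul] at h₁ h₂ ⊢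
  obtain rfl : b = 1 - a := by linarith
  linarith

lemma strictConvexOn_mul_exp_div {ε : ℝ} (hε : 0 < ε) :
    StrictConvexOn ℝ univ fun x => ε * Real.exp (x / ε) := by
  refine ⟨convex_univ, fun x _ y _ hxy a b ha hb hab => ?_⟩
  have hxy' : x / ε ≠ y / ε := mt (div_left_inj' hε.ne').1 hxy
  have h := strictConvexOn_exp.2 (mem_univ _) (mem_univ _) hxy' ha hb hab
  simp only [smul_eq_mul] at h ⊢
  calc ε * Real.exp ((a * x + b * y) / ε) = ε * Real.exp (a * (x / ε) + b * (y / ε)) := by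
        ring_nf
    _ < ε * (a * Real.exp (x / ε) + b * Real.exp (y / ε)) := mul_lt_mul_of_pos_left h hε
    _ = _ := by ring

def IsProx (k g : ℝ → ℝ) (s : Set ℝ) (p a : ℝ) : Prop :=
  a ∈ s ∧ IsMinOn (fun q => k (p - q) + g q) s a

namespace IsProx

variable {k g : ℝ → ℝ} {s : Set ℝ} {p p₁ p₂ a a₁ a₂ : ℝ}

lemma le (h : IsProx k g s p a) {q : ℝ} (hq : q ∈ s) : k (p - a) + g a ≤ k (p - q) + g q :=
  isMinOn_iff.1 h.2 q hq

theorem eq (hk : StrictConvexOn ℝ univ k) (hg : ConvexOn ℝ s g) (h₁ : IsProx k g s p a₁)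
    (h₂ : IsProx k g s p a₂) : a₁ = a₂ := by
  by_contra hne
  wlog hlt : a₁ < a₂ generalizing a₁ a₂
  · exact this h₂ h₁ (Ne.symm hne) (lt_of_le_of_ne (not_lt.1 hlt) (Ne.symm hne))
  have hm : (a₁ + a₂) / 2 ∈ s :=
    (convex_iff_ordConnected.1 hg.1).out h₁.1 h₂.1 ⟨by linarith, by linarith⟩
  have hk' := hk.map_add_map_lt_of_add_eq (mem_univ (p - a₂)) (mem_univ (p - a₁))
    (x' := p - (a₁ + a₂) / 2) (y' := p - (a₁ + a₂) / 2) (by linarith) (by linarith) (by ring)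
  have hg' := hg.map_add_map_le_of_add_eq h₁.1 h₂.1 (x' := (a₁ + a₂) / 2) (y' := (a₁ + a₂) / 2)
    (by linarith) (by linarith) (by ring)
  linarith [h₁.le hm, h₂.le hm]

theorem le_of_lt (hk : StrictConvexOn ℝ univ k) (hp : p₁ < p₂) (h₁ : IsProx k g s p₁ a₁)
    (h₂ : IsProx k g s p₂ a₂) : a₁ ≤ a₂ := by
  by_contra! hlt
  have hk' := hk.map_add_map_lt_of_add_eq (mem_univ (p₁ - a₁)) (mem_univ (p₂ - a₂))
    (x' := p₁ - a₂) (y' := p₂ - a₁) (by linarith) (by linarith) (by ring)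
  linarith [h₁.le h₂.1, h₂.le h₁.1]

theorem le_add_sub (hk : StrictConvexOn ℝ univ k) (hg : ConvexOn ℝ s g) (hp : p₁ ≤ p₂)
    (h₁ : IsProx k g s p₁ a₁) (h₂ : IsProx k g s p₂ a₂) : a₂ ≤ a₁ + (p₂ - p₁) := by
  by_contra! hlt
  set d := p₂ - p₁
  have mem : ∀ q, a₁ ≤ q → q ≤ a₂ → q ∈ s := fun q h h' =>
    (convex_iff_ordConnected.1 hg.1).out h₁.1 h₂.1 ⟨h, h'⟩
  have hd₁ : a₁ + d ∈ s := mem _ (by linarith) hlt.le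
  have hd₂ : a₂ - d ∈ s := mem _ (by linarith) (by linarith)
  have hg' := hg.map_add_map_le_of_add_eq h₁.1 h₂.1 (x' := a₁ + d) (y' := a₂ - d)
    (by linarith) hlt.le (by ring)
  have e₁ : p₁ - (a₂ - d) = p₂ - a₂ := by ring
  have e₂ : p₂ - (a₁ + d) = p₁ - a₁ := by ring
  -- the shifts swap the kernel terms and do not increase the `g` terms
  have hmin : IsProx k g s p₁ (a₂ - d) := by
    refine ⟨hd₂, isMinOn_iff.2 fun q hq => ?_⟩
    have := h₂.le hd₁
    rw [e₂] at this
    rw [e₁]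
    linarith [h₁.le hq]
  linarith [h₁.eq hk hg hmin]

theorem lipschitzWith_one {f : ℝ → ℝ} (hk : StrictConvexOn ℝ univ k) (hg : ConvexOn ℝ s g)
    (hf : ∀ p, IsProx k g s p (f p)) : LipschitzWith 1 f := by
  refine LipschitzWith.of_le_add fun p₁ p₂ => ?_
  rw [Real.dist_eq]
  rcases le_or_gt p₂ p₁ with hp | hp
  · linarith [le_add_sub hk hg hp (hf p₂) (hf p₁), le_abs_self (p₁ - p₂)]
  · linarith [le_of_lt hk hp (hf p₁) (hf p₂), abs_nonneg (p₁ - p₂)]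

end IsProx

theorem _root_.LowerSemicontinuous.exists_forall_le_of_sublevel_subset {α β : Type*}
    [TopologicalSpace α] [LinearOrder β] {f : α → β} (hf : LowerSemicontinuous f) {x₀ : α}
    {K : Set α} (hK : IsCompact K) (hsub : {x | f x ≤ f x₀} ⊆ K) : ∃ a, ∀ x, f a ≤ f x := by
  obtain ⟨a, -, ha⟩ := (hf.lowerSemicontinuousOn {x | f x ≤ f x₀}).exists_isMinOn
    ⟨x₀, show f x₀ ≤ f x₀ from le_rfl⟩
    (hK.of_isClosed_subset (hf.isClosed_preimage (f x₀)) hsub)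
  refine ⟨a, fun x => ?_⟩
  rcases le_or_gt (f x) (f x₀) with hx | hx
  · exact ha hx
  · exact (ha (show f x₀ ≤ f x₀ from le_rfl)).trans hx.le

lemma lowerSemicontinuous_coe_add {α : Type*} [TopologicalSpace α] {f : α → ℝ} {g : α → EReal}
    (hf : Continuous f) (hg : LowerSemicontinuous g) :
    LowerSemicontinuous fun z => (f z : EReal) + g z :=
  (continuous_coe_real_ereal.comp hf).lowerSemicontinuous.add' hg fun _ =>
    EReal.continuousAt_add (.inl (EReal.coe_ne_top _)) (.inl (EReal.coe_ne_bot _))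

variable {φ : ℝ → ℝ≥0∞}

lemma coe_le_fconj (h1 : φ 1 = 0) (q : ℝ) : (q : EReal) ≤ fconj φ q :=
  le_iSup_of_le 1 (by simp [h1])

lemma fconj_ne_bot (h1 : φ 1 = 0) (q : ℝ) : fconj φ q ≠ ⊥ :=
  ne_bot_of_le_ne_bot (EReal.coe_ne_bot q) (coe_le_fconj h1 q)

lemma coe_toReal_fconj (h1 : φ 1 = 0) {q : ℝ} (hq : fconj φ q ≠ ⊤) :
    ((fconj φ q).toReal : EReal) = fconj φ q :=
  EReal.coe_toReal hq (fconj_ne_bot h1 q)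

lemma fconj_zero (h1 : φ 1 = 0) : fconj φ 0 = 0 :=
  le_antisymm (iSup_le fun x => by simpa using EReal.coe_ennreal_nonneg (φ x))
    (by simpa using coe_le_fconj h1 0)

lemma lowerSemicontinuous_fconj : LowerSemicontinuous (fconj φ) :=
  lowerSemicontinuous_iSup fun x =>
    lowerSemicontinuous_coe_add (continuous_mul_const x) lowerSemicontinuous_const

lemma fconj_le_coe_iff {q c : ℝ} : fconj φ q ≤ c ↔ ∀ x, φ x ≠ ⊤ → q * x - (φ x).toReal ≤ c := by
  refine iSup_le_iff.trans (forall_congr' fun x => ?_)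
  rcases eq_or_ne (φ x) ⊤ with hx | hx
  · simp [hx]
  · rw [← EReal.coe_ennreal_toReal hx, ← EReal.coe_sub, EReal.coe_le_coe_iff]
    exact ⟨fun h _ => h, fun h => h hx⟩

lemma convexOn_toReal_fconj (h1 : φ 1 = 0) :
    ConvexOn ℝ {q | fconj φ q ≠ ⊤} fun q => (fconj φ q).toReal := by
  have comb : ∀ {q₁ q₂ a b : ℝ}, fconj φ q₁ ≠ ⊤ → fconj φ q₂ ≠ ⊤ → 0 ≤ a → 0 ≤ b → a + b = 1 →
      fconj φ (a * q₁ + b * q₂) ≤ ↑(a * (fconj φ q₁).toReal + b * (fconj φ q₂).toReal) := by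
    intro q₁ q₂ a b hq₁ hq₂ ha hb hab
    refine fconj_le_coe_iff.2 fun x hx => ?_
    have e₁ := fconj_le_coe_iff.1 (coe_toReal_fconj h1 hq₁).ge x hx
    have e₂ := fconj_le_coe_iff.1 (coe_toReal_fconj h1 hq₂).ge x hx
    have := add_le_add (mul_le_mul_of_nonneg_left e₁ ha) (mul_le_mul_of_nonneg_left e₂ hb)
    linear_combination this + (φ x).toReal * hab
  refine ⟨fun q₁ hq₁ q₂ hq₂ a b ha hb hab => ?_, fun q₁ hq₁ q₂ hq₂ a b ha hb hab => ?_⟩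
  · exact ne_top_of_le_ne_top (EReal.coe_ne_top _) (comb hq₁ hq₂ ha hb hab)
  · have := EReal.toReal_le_toReal (comb hq₁ hq₂ ha hb hab) (fconj_ne_bot h1 _)
      (EReal.coe_ne_top _)
    rwa [EReal.toReal_coe] at this

variable {ε : ℝ}

lemma isProx_of_forall_aproxObj_le (h1 : φ 1 = 0) {p a : ℝ}
    (h : ∀ q, aproxObj φ ε p a ≤ aproxObj φ ε p q) :
    IsProx (fun x => ε * Real.exp (x / ε)) (fun q => (fconj φ q).toReal)
      {q | fconj φ q ≠ ⊤} p a := by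
  have finite : ∀ q, fconj φ q ≠ ⊤ →
      aproxObj φ ε p q = ↑(ε * Real.exp ((p - q) / ε) + (fconj φ q).toReal) := fun q hq => by
    rw [aproxObj, EReal.coe_add, coe_toReal_fconj h1 hq]
  have ha : fconj φ a ≠ ⊤ := fun ha => by
    have := h 0
    rw [aproxObj, ha, EReal.coe_add_top, finite 0 (by simp [fconj_zero h1])] at this
    exact EReal.coe_ne_top _ (top_le_iff.1 this)
  refine ⟨ha, isMinOn_iff.2 fun q hq => ?_⟩
  have := h q
  rwa [finite a ha, finite q hq, EReal.coe_le_coe_iff] at this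

lemma mem_Icc_of_aproxObj_le (h1 : φ 1 = 0) (hε : 0 < ε) {p q : ℝ}
    (hq : aproxObj φ ε p q ≤ aproxObj φ ε p 0) :
    q ∈ Icc (2 * p + 2 * ε * (1 - Real.log 2) - ε * Real.exp (p / ε)) (ε * Real.exp (p / ε)) := by
  have hlow : ((ε * Real.exp ((p - q) / ε) + q : ℝ) : EReal) ≤ aproxObj φ ε p q := by
    rw [aproxObj, EReal.coe_add]
    exact add_le_add le_rfl (coe_le_fconj h1 q)
  have hq' : ε * Real.exp ((p - q) / ε) + q ≤ ε * Real.exp (p / ε) := by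
    have := hlow.trans hq
    rw [aproxObj, fconj_zero h1, add_zero, sub_zero] at this
    exact_mod_cast this
  -- `e^x / 2 ≥ x + 1 - log 2` makes the exponential dominate the linear term `q`
  have hexp := Real.add_one_le_exp ((p - q) / ε - Real.log 2)
  rw [Real.exp_sub, Real.exp_log two_pos] at hexp
  have hpq : ε * ((p - q) / ε) = p - q := mul_div_cancel₀ _ hε.ne'
  have hpos := mul_pos hε (Real.exp_pos ((p - q) / ε))
  constructor <;> nlinarith

lemma exists_forall_aproxObj_le (h1 : φ 1 = 0) (hε : 0 < ε) (p : ℝ) :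
    ∃ a, ∀ q, aproxObj φ ε p a ≤ aproxObj φ ε p q :=
  (lowerSemicontinuous_coe_add (by fun_prop) lowerSemicontinuous_fconj
    ).exists_forall_le_of_sublevel_subset (x₀ := 0) isCompact_Icc
    fun _ hq => mem_Icc_of_aproxObj_le h1 hε hq

/-- for every entropy function `φ` and `ε > 0`, the anisotropic proximity
operator `aprox_{φ^*}^ε(p) = argmin_q { ε e^{(p−q)/ε} + φ^*(q) }` is well defined (the
minimizer exists and is unique) and is `1`-Lipschitz in `p`. -/
theorem aprox_wellDefined_lipschitz
    (φ : ℝ → ℝ≥0∞) (hφ : IsEntropyFunction φ) (ε : ℝ) (hε : 0 < ε) :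
    ∃ a : ℝ → ℝ,
      (∀ p q : ℝ, aproxObj φ ε p (a p) ≤ aproxObj φ ε p q) ∧
      (∀ p q : ℝ, (∀ r : ℝ, aproxObj φ ε p q ≤ aproxObj φ ε p r) → q = a p) ∧
      LipschitzWith 1 a := by
  have hk := strictConvexOn_mul_exp_div hε
  have hg := convexOn_toReal_fconj hφ.one_eq_zero
  choose a ha using exists_forall_aproxObj_le hφ.one_eq_zero hε
  have hprox := fun p => isProx_of_forall_aproxObj_le hφ.one_eq_zero (ha p)
  refine ⟨a, ha, fun p q hq => ?_, IsProx.lipschitzWith_one hk hg hprox⟩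
  exact (isProx_of_forall_aproxObj_le hφ.one_eq_zero hq).eq hk hg (hprox p)

end UMOT
end
end

section
/- Let t > 0 and ε > 0. For the entropy function φ(x) = t(x log x − x + 1) on [0,∞) (with 0 log 0 = 0, φ = +∞ on (−∞,0)), which corresponds to the scaled Kullback–Leibler divergence, the anisotropic proximity operator is aprox_{φ^*}^ε(p) = (t/(t+ε)) p for every p ∈ ℝ. -/
open MeasureTheory ENNReal Real Filter Topology

noncomputable section
namespace UMOT

/-- The scaled Boltzmann–Shannon entropy `φ(x) = t(x log x − x + 1)` (with `0 log 0 = 0`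
and `φ = ⊤` on `(-∞,0)`), corresponding to the Kullback–Leibler divergence `t·KL`. -/
def klEntropy (t : ℝ) (x : ℝ) : ℝ≥0∞ :=
  if x < 0 then ⊤ else ENNReal.ofReal (t * (x * Real.log x - x + 1))

/-! The conjugate of `t(x log x − x + 1)` is `q ↦ t e^{q/t} − t`, so the objective is the real
function `ε e^{(p−q)/ε} + t e^{q/t} − t`. Writing it as `(t+ε)` times a convex combination of
`e^{(p−q)/ε}` and `e^{q/t}` whose exponents average to `p/(t+ε)`, strict convexity of `exp`
bounds it below by its value at the unique `q` where both exponents agree, `q = t p/(t+ε)`. -/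

lemma mul_le_exp_add_mul_log_sub {x : ℝ} (hx : 0 ≤ x) (y : ℝ) :
    y * x ≤ exp y + (x * log x - x) := by
  rcases hx.eq_or_lt with rfl | hx
  · simpa using (exp_pos y).le
  · have h := mul_le_mul_of_nonneg_left (add_one_le_exp (y - log x)) hx.le
    rw [exp_sub, exp_log hx, mul_div_cancel₀ _ hx.ne'] at h
    linarith

lemma lt_mul_exp_add_mul_exp {u v x y : ℝ} (hu : 0 < u) (hv : 0 < v) (hxy : x ≠ y) :
    (u + v) * exp ((u * x + v * y) / (u + v)) < u * exp x + v * exp y := by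
  have huv : 0 < u + v := hu.trans (lt_add_of_pos_right u hv)
  have h := strictConvexOn_exp.2 (Set.mem_univ x) (Set.mem_univ y) hxy
    (div_pos hu huv) (div_pos hv huv) (by field_simp)
  simp only [smul_eq_mul] at h
  calc (u + v) * exp ((u * x + v * y) / (u + v))
      = (u + v) * exp (u / (u + v) * x + v / (u + v) * y) := by congr 2; field_simp
    _ < (u + v) * (u / (u + v) * exp x + v / (u + v) * exp y) := by gcongr
    _ = u * exp x + v * exp y := by field_simp

variable {t : ℝ}

lemma coe_klEntropy_of_nonneg (ht : 0 ≤ t) {x : ℝ} (hx : 0 ≤ x) :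
    ((klEntropy t x : ℝ≥0∞) : EReal) = ((t * (x * log x - x + 1) : ℝ) : EReal) := by
  have hkl : 0 ≤ x * log x - x + 1 := by
    simpa [InformationTheory.klFun, add_sub_right_comm] using InformationTheory.klFun_nonneg hx
  rw [klEntropy, if_neg hx.not_gt, EReal.coe_ennreal_ofReal, max_eq_left (mul_nonneg ht hkl)]

lemma fconj_klEntropy (ht : 0 < t) (q : ℝ) :
    fconj (klEntropy t) q = ((t * exp (q / t) - t : ℝ) : EReal) := by
  refine le_antisymm (iSup_le fun x => ?_) ?_
  · rcases lt_or_ge x 0 with hx | hx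
    · simp [klEntropy, hx]
    · rw [coe_klEntropy_of_nonneg ht.le hx, ← EReal.coe_sub, EReal.coe_le_coe_iff]
      have h := mul_le_exp_add_mul_log_sub hx (q / t)
      rw [div_mul_eq_mul_div, div_le_iff₀ ht] at h
      nlinarith
  · refine le_trans (le_of_eq ?_) (le_iSup _ (exp (q / t)))
    rw [coe_klEntropy_of_nonneg ht.le (exp_pos _).le, ← EReal.coe_sub, log_exp]
    congr 1
    field_simp
    ring

lemma aproxObj_klEntropy (ht : 0 < t) (ε p q : ℝ) :
    aproxObj (klEntropy t) ε p q
      = ((ε * exp ((p - q) / ε) + t * exp (q / t) - t : ℝ) : EReal) := by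
  rw [aproxObj, fconj_klEntropy ht, ← EReal.coe_add, add_sub_assoc]

lemma aproxObj_klEntropy_lt (ht : 0 < t) {ε : ℝ} (hε : 0 < ε) {p q : ℝ}
    (hq : q ≠ t / (t + ε) * p) :
    aproxObj (klEntropy t) ε p (t / (t + ε) * p) < aproxObj (klEntropy t) ε p q := by
  have htε : 0 < t + ε := by linarith
  have hexp : (p - q) / ε ≠ q / t := by
    contrapose! hq
    field_simp at hq ⊢
    linarith
  have h := lt_mul_exp_add_mul_exp hε ht hexp
  have havg : (ε * ((p - q) / ε) + t * (q / t)) / (ε + t) = p / (t + ε) := by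
    field_simp
    ring
  have hleft : (p - t / (t + ε) * p) / ε = p / (t + ε) := by
    field_simp
    ring
  have hright : t / (t + ε) * p / t = p / (t + ε) := by
    field_simp
  rw [aproxObj_klEntropy ht, aproxObj_klEntropy ht, EReal.coe_lt_coe_iff, hleft, hright]
  rw [havg] at h
  linarith

/-- (Example 4.2 iii)): for the entropy function `φ = t(x log x − x + 1)`,
the anisotropic proximity operator is `aprox_{φ^*}^ε(p) = (t/(t+ε)) p`, i.e. this value is
the unique minimizer of `q ↦ ε e^{(p−q)/ε} + φ^*(q)`. -/
theorem aprox_kl (t : ℝ) (ht : 0 < t) (ε : ℝ) (hε : 0 < ε) (p : ℝ) :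
    (∀ q : ℝ, aproxObj (klEntropy t) ε p (t / (t + ε) * p) ≤ aproxObj (klEntropy t) ε p q)
    ∧ (∀ q : ℝ, (∀ r : ℝ, aproxObj (klEntropy t) ε p q ≤ aproxObj (klEntropy t) ε p r) →
        q = t / (t + ε) * p) := by
  refine ⟨fun q => ?_, fun q hq => ?_⟩
  · rcases eq_or_ne q (t / (t + ε) * p) with rfl | hne
    · exact le_rfl
    · exact (aproxObj_klEntropy_lt ht hε hne).le
  · by_contra hne
    exact (hq _).not_gt (aproxObj_klEntropy_lt ht hε hne)

end UMOT
end
end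

section
/- Let t > 0 and ε > 0. For the entropy function φ(x) = t|x−1| on [0,∞) (with φ = +∞ on (−∞,0)), which corresponds to the scaled total variation distance, the anisotropic proximity operator is the clipping map: aprox_{φ^*}^ε(p) = −t if p < −t, aprox_{φ^*}^ε(p) = p if p ∈ [−t,t], and aprox_{φ^*}^ε(p) = t if p > t. -/
open MeasureTheory ENNReal Real Filter Topology

noncomputable section
namespace UMOT

/-- The scaled total variation entropy `φ(x) = t|x−1|` on `[0,∞)` (with `φ = ⊤` on
`(-∞,0)`), corresponding to the scaled total variation distance. -/
def tvEntropy (t : ℝ) (x : ℝ) : ℝ≥0∞ :=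
  if x < 0 then ⊤ else ENNReal.ofReal (t * |x - 1|)

/-! The clipped value `m` is characterised by the optimality condition `s ∈ ∂φ^*(m)` for the
slope `s = e^{(p-m)/ε}` of the exponential term, which by Fenchel–Young says that `s` maximises
`x ↦ m x − φ(x)`. Then `φ^*(q) ≥ q s − φ(s) = φ^*(m) + s (q − m)`, while the strictly convex
exponential term lies strictly above its tangent at `m`, so `m` is the unique minimiser. For
`φ = t|x−1|` the condition is that `s ≤ 1` when `m = −t`, `s = 1` when `|m| < t`, and `s ≥ 1`
when `m = t`, which is exactly what clipping produces. -/

theorem mul_exp_sub_div_tangent_lt {ε : ℝ} (hε : 0 < ε) (p : ℝ) {q m : ℝ} (hq : q ≠ m) :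
    ε * exp ((p - m) / ε) - exp ((p - m) / ε) * (q - m) < ε * exp ((p - q) / ε) := by
  have hsplit : exp ((p - q) / ε) = exp ((p - m) / ε) * exp ((m - q) / ε) := by
    rw [← exp_add]; ring_nf
  have htangent : (m - q) / ε + 1 < exp ((m - q) / ε) :=
    add_one_lt_exp (div_ne_zero (sub_ne_zero.2 hq.symm) hε.ne')
  have hscaled : ε * exp ((p - m) / ε) * ((m - q) / ε + 1)
      = ε * exp ((p - m) / ε) - exp ((p - m) / ε) * (q - m) := by
    field_simp; ring
  rw [hsplit, ← mul_assoc, ← hscaled]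
  exact mul_lt_mul_of_pos_left htangent (mul_pos hε (exp_pos _))

theorem le_fconj (φ : ℝ → ℝ≥0∞) (q x : ℝ) :
    ((q * x : ℝ) : EReal) - ((φ x : ℝ≥0∞) : EReal) ≤ fconj φ q :=
  le_iSup (fun x : ℝ => ((q * x : ℝ) : EReal) - ((φ x : ℝ≥0∞) : EReal)) x

theorem fconj_eq_of_forall_le {φ : ℝ → ℝ≥0∞} {m s : ℝ}
    (hmax : ∀ x : ℝ, ((m * x : ℝ) : EReal) - φ x ≤ ((m * s : ℝ) : EReal) - φ s) :
    fconj φ m = ((m * s : ℝ) : EReal) - φ s :=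
  le_antisymm (iSup_le hmax) (le_fconj φ m s)

theorem aproxObj_lt_of_forall_le {φ : ℝ → ℝ≥0∞} {ε : ℝ} (hε : 0 < ε) {p m : ℝ}
    (hfin : φ (exp ((p - m) / ε)) ≠ ⊤)
    (hmax : ∀ x : ℝ, ((m * x : ℝ) : EReal) - φ x
      ≤ ((m * exp ((p - m) / ε) : ℝ) : EReal) - φ (exp ((p - m) / ε)))
    {q : ℝ} (hq : q ≠ m) :
    aproxObj φ ε p m < aproxObj φ ε p q := by
  set s := exp ((p - m) / ε)
  have hφs : ((φ s : ℝ≥0∞) : EReal) = ((φ s).toReal : EReal) := by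
    rw [← EReal.coe_ennreal_toReal hfin]
  have htangent := mul_exp_sub_div_tangent_lt hε p hq
  calc aproxObj φ ε p m
      = ((ε * exp ((p - m) / ε) + (m * s - (φ s).toReal) : ℝ) : EReal) := by
        rw [aproxObj, fconj_eq_of_forall_le hmax, hφs]; norm_cast
    _ < ((ε * exp ((p - q) / ε) + (q * s - (φ s).toReal) : ℝ) : EReal) := by
        exact_mod_cast (by linarith)
    _ = ((ε * exp ((p - q) / ε) : ℝ) : EReal) + (((q * s : ℝ) : EReal) - φ s) := by
        rw [hφs]; norm_cast
    _ ≤ aproxObj φ ε p q := add_le_add_right (le_fconj φ q s) _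

theorem coe_sub_tvEntropy {t x : ℝ} (ht : 0 ≤ t) (hx : 0 ≤ x) (y : ℝ) :
    (y : EReal) - ((tvEntropy t x : ℝ≥0∞) : EReal) = ((y - t * |x - 1| : ℝ) : EReal) := by
  rw [tvEntropy, if_neg (not_lt.2 hx), EReal.coe_ennreal_ofReal,
    max_eq_left (by positivity), ← EReal.coe_sub]

theorem sub_tvEntropy_le_of_mem_subdifferential {t m s : ℝ} (ht : 0 < t)
    (hlo : -t ≤ m) (hhi : m ≤ t) (hs : 0 ≤ s) (hs_le : m < t → s ≤ 1) (hs_ge : -t < m → 1 ≤ s)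
    (x : ℝ) :
    ((m * x : ℝ) : EReal) - tvEntropy t x ≤ ((m * s : ℝ) : EReal) - tvEntropy t s := by
  rcases lt_or_ge x 0 with hx | hx
  · simp [tvEntropy, hx]
  rw [coe_sub_tvEntropy ht.le hx, coe_sub_tvEntropy ht.le hs, EReal.coe_le_coe_iff]
  have habove := mul_le_mul_of_nonneg_left (le_abs_self (x - 1)) ht.le
  have hbelow := mul_le_mul_of_nonneg_left (neg_abs_le (x - 1)) ht.le
  rcases hhi.lt_or_eq with hmt | rfl
  · rcases hlo.lt_or_eq with htm | rfl
    · obtain rfl : s = 1 := le_antisymm (hs_le hmt) (hs_ge htm)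
      have hslope : m * (x - 1) ≤ t * |x - 1| := (le_abs_self _).trans <| by
        rw [abs_mul]; exact mul_le_mul_of_nonneg_right (abs_le.2 ⟨hlo, hhi⟩) (abs_nonneg _)
      norm_num; linarith
    · rw [abs_of_nonpos (a := s - 1) (by linarith [hs_le hmt])]
      nlinarith
  · rw [abs_of_nonneg (a := s - 1) (by linarith [hs_ge (by linarith)])]
    nlinarith

theorem clip_mem_subdifferential {t ε : ℝ} (ht : 0 ≤ t) (hε : 0 < ε) {p m : ℝ}
    (hm : m = if p < -t then -t else if p ≤ t then p else t) :
    -t ≤ m ∧ m ≤ t ∧ (m < t → exp ((p - m) / ε) ≤ 1) ∧ (-t < m → 1 ≤ exp ((p - m) / ε)) := by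
  rw [exp_le_one_iff, one_le_exp_iff, div_nonpos_iff, div_nonneg_iff]
  split_ifs at hm <;> subst hm <;> refine ⟨?_, ?_, ?_, ?_⟩ <;> intros <;>
    first | linarith | (right; constructor <;> linarith) | (left; constructor <;> linarith)

/-- (Example 4.2 iv)): for the entropy function `φ = t|x−1|`, the
anisotropic proximity operator is the clipping map to `[−t,t]`, i.e. the clipped value is
the unique minimizer of `q ↦ ε e^{(p−q)/ε} + φ^*(q)`. -/
theorem aprox_tv (t : ℝ) (ht : 0 < t) (ε : ℝ) (hε : 0 < ε) (p : ℝ) :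
    (∀ q : ℝ, aproxObj (tvEntropy t) ε p (if p < -t then -t else if p ≤ t then p else t)
        ≤ aproxObj (tvEntropy t) ε p q)
    ∧ (∀ q : ℝ, (∀ r : ℝ, aproxObj (tvEntropy t) ε p q ≤ aproxObj (tvEntropy t) ε p r) →
        q = if p < -t then -t else if p ≤ t then p else t) := by
  set m := if p < -t then -t else if p ≤ t then p else t with hm
  obtain ⟨hlo, hhi, hs_le, hs_ge⟩ := clip_mem_subdifferential ht.le hε hm
  have hfin : tvEntropy t (exp ((p - m) / ε)) ≠ ⊤ := by
    simp [tvEntropy, (exp_pos _).not_gt]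
  have hlt : ∀ q, q ≠ m → aproxObj (tvEntropy t) ε p m < aproxObj (tvEntropy t) ε p q :=
    fun q hq => aproxObj_lt_of_forall_le hε hfin
      (sub_tvEntropy_le_of_mem_subdifferential ht hlo hhi (exp_pos _).le hs_le hs_ge) hq
  refine ⟨fun q => ?_, fun q hq => ?_⟩
  · rcases eq_or_ne q m with rfl | hne
    · exact le_rfl
    · exact (hlt q hne).le
  · by_contra hne
    exact (hq m).not_gt (hlt q hne)

end UMOT
end
end
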